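/- arXiv:2409.14559 — 4 statements merged into one kernel-verified Lean document; each statement's English description precedes it below -/
import Mathlib

section
/- Let T be a string, let B be a cover of T, and let p be the smallest period of B. Partition the set of starting positions of occurrences of B in T into maximal arithmetic progressions with common difference p, and let Δ' ≥ 1 be such that every such maximal progression has at least Δ' terms. If the prefix B' of T of length |B| + (Δ'−1)·p has period p, then B' is also a cover of T. -/
section Defs

variable {α : Type*}

/-- `C` occurs in `T` at starting position `i`. -/
def OccursAt (C T : List α) (i : ℕ) : Prop :=
  i + C.length ≤ T.length ∧ (T.drop i).take C.length = C

/-- `C` is a cover of `T`: `C` occurs in `T` and every position of `T`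
lies within an occurrence of `C`. -/
def IsCover (C T : List α) : Prop :=
  (∃ i, OccursAt C T i) ∧
    ∀ q, q < T.length → ∃ i, OccursAt C T i ∧ i ≤ q ∧ q < i + C.length

/-- A border of `T` is both a prefix and a suffix of `T`. -/
def IsBorder (B T : List α) : Prop := B <+: T ∧ B <:+ T

/-- `p` is a period of `U`: `U[i] = U[i+p]` for all `0 ≤ i < |U| - p`. -/
def IsPeriod (p : ℕ) (U : List α) : Prop :=
  0 < p ∧ ∀ i, i + p < U.length → U[i]? = U[i + p]?

/-- `U` is aperiodic: its smallest period `p` satisfies `2p > |U|`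
(equivalently, every period `p` of `U` satisfies `2p > |U|`). -/
def StrAperiodic (U : List α) : Prop := ∀ p, IsPeriod p U → U.length < 2 * p

/-- A nonempty string `X` is primitive if `X = Y^t` implies `t = 1`. -/
def StrPrimitive (X : List α) : Prop :=
  X ≠ [] ∧ ∀ (Y : List α) (t : ℕ), X = (List.replicate t Y).flatten → t = 1

/-- A string is superprimitive if it has no proper cover. -/
def Superprimitive (T : List α) : Prop :=
  ¬ ∃ C : List α, IsCover C T ∧ C.length < T.length

/-- The length of the shortest cover of `T`. -/
noncomputable def covLen (T : List α) : ℕ :=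
  sInf {c | ∃ C : List α, C.length = c ∧ IsCover C T}

/-- `{a, a+p, ..., a+(t-1)p}` is a maximal arithmetic progression with
difference `p` inside the set `S`. -/
def MaxProg (S : Set ℕ) (p a t : ℕ) : Prop :=
  0 < t ∧ (∀ r, r < t → a + r * p ∈ S) ∧ (∀ b, b + p = a → b ∉ S) ∧ a + t * p ∉ S

end Defs

/-!
Let `k = Δ' - 1` and `B' = T[0, |B| + k p)`. As `|B|` is a period of `B`, minimality gives
`p ≤ |B|`, so `k + 1` occurrences of `B` at distance `p` leave no gaps; since `B'` has period `p`
and begins with `B`, it occurs wherever `B` occurs `k + 1` times in a row at distance `p`. Every occurrence of `B` lies in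
a maximal progression with at least `k + 1` terms, hence in such a window of `k + 1` consecutive
terms, and the corresponding occurrence of `B'` covers everything that occurrence of `B` covers.
-/

section

variable {α : Type*}

theorem OccursAt.getElem?_add {C T : List α} {a k : ℕ} (h : OccursAt C T a)
    (hk : k < C.length) : T[a + k]? = C[k]? := by
  rw [← h.2, List.getElem?_take_of_lt hk, List.getElem?_drop]

theorem occursAt_of_getElem?_add {C T : List α} {a : ℕ} (hlen : a + C.length ≤ T.length)
    (h : ∀ k < C.length, T[a + k]? = C[k]?) : OccursAt C T a := by
  refine ⟨hlen, List.ext_getElem? fun k => ?_⟩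
  rcases lt_or_ge k C.length with hk | hk
  · rw [List.getElem?_take_of_lt hk, List.getElem?_drop, h k hk]
  · rw [List.getElem?_take_eq_none hk, List.getElem?_eq_none hk]

theorem IsCover.occursAt_zero {C T : List α} (h : IsCover C T) : OccursAt C T 0 := by
  rcases Nat.eq_zero_or_pos T.length with hT | hT
  · obtain ⟨i, hi⟩ := h.1
    obtain rfl : i = 0 := by have := hi.1; omega
    exact hi
  · obtain ⟨i, hi, hi0, -⟩ := h.2 0 hT
    rwa [Nat.le_zero.1 hi0] at hi

theorem IsPeriod.getElem?_sub_mul {p : ℕ} {U : List α} (h : IsPeriod p U) {r j : ℕ}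
    (hrj : r * p ≤ j) (hj : j < U.length) : U[j - r * p]? = U[j]? := by
  induction r with
  | zero => simp
  | succ r ih =>
    rw [add_one_mul] at hrj ⊢
    calc U[j - (r * p + p)]? = U[j - (r * p + p) + p]? := h.2 _ (by omega)
      _ = U[j - r * p]? := by congr 1; omega
      _ = U[j]? := ih (by omega)

theorem occursAt_of_isPeriod_of_prefix {U B T : List α} {p k a : ℕ} (hU : IsPeriod p U)
    (hpB : p ≤ B.length) (hB : B <+: U) (hlen : U.length = B.length + k * p)
    (hocc : ∀ s ≤ k, OccursAt B T (a + s * p)) : OccursAt U T a := by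
  refine occursAt_of_getElem?_add (by have := (hocc k le_rfl).1; omega) fun n hn => ?_
  -- `n` falls into the copy of `B` starting at `r p`
  set r := min (n / p) k
  have hrn : r * p ≤ n := (Nat.mul_le_mul_right p (min_le_left _ _)).trans (Nat.div_mul_le_self n p)
  have hnr : n - r * p < B.length := by
    rcases le_total (n / p) k with h | h
    · rw [show r = n / p from min_eq_left h, ← Nat.mod_eq_sub_div_mul]
      exact (Nat.mod_lt n hU.1).trans_le hpB
    · rw [show r = k from min_eq_right h]
      have := hU.1
      omega
  calc T[a + n]? = T[a + r * p + (n - r * p)]? := by congr 1; omega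
    _ = B[n - r * p]? := (hocc r (min_le_right _ _)).getElem?_add hnr
    _ = U[n - r * p]? := by rw [List.prefix_iff_eq_take.1 hB, List.getElem?_take_of_lt hnr]
    _ = U[n]? := hU.getElem?_sub_mul hrn hn

theorem IsCover.of_forall_occursAt_extend {B U T : List α} (hB : IsCover B T)
    (hext : ∀ i, OccursAt B T i → ∃ j, OccursAt U T j ∧ j ≤ i ∧ i + B.length ≤ j + U.length) :
    IsCover U T := by
  refine ⟨?_, fun q hq => ?_⟩
  · obtain ⟨i, hi⟩ := hB.1
    obtain ⟨j, hj, -⟩ := hext i hi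
    exact ⟨j, hj⟩
  · obtain ⟨i, hi, hiq, hqi⟩ := hB.2 q hq
    obtain ⟨j, hj, hji, hij⟩ := hext i hi
    exact ⟨j, hj, by omega, by omega⟩

end

theorem exists_maxProg_of_mem {S : Set ℕ} {p : ℕ} (hp : 0 < p) (hS : BddAbove S) {i : ℕ}
    (hi : i ∈ S) : ∃ a t r, MaxProg S p a t ∧ r < t ∧ i = a + r * p := by
  classical
  induction i using Nat.strong_induction_on with
  | _ i ih =>
  by_cases hprev : ∃ b ∈ S, b + p = i
  · obtain ⟨b, hb, rfl⟩ := hprev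
    obtain ⟨a, t, r, hmp, hrt, rfl⟩ := ih _ (by omega) hb
    refine ⟨a, t, r + 1, hmp, ?_, by ring⟩
    by_contra! ht
    exact hmp.2.2.2 (by rwa [show t = r + 1 by omega, add_mul, one_mul, ← add_assoc])
  · push Not at hprev
    obtain ⟨N, hN⟩ := hS
    have hexit : ∃ t, i + t * p ∉ S := ⟨N + 1, fun h => by have := hN h; nlinarith⟩
    have ht : 0 < Nat.find hexit :=
      Nat.pos_of_ne_zero fun h => Nat.find_spec hexit (by rwa [h, zero_mul, add_zero])
    refine ⟨i, Nat.find hexit, 0, ⟨ht, fun r hr => not_not.1 (Nat.find_min hexit hr),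
      fun b hb hbS => hprev b hbS hb, Nat.find_spec hexit⟩, ht, by simp⟩

theorem MaxProg.exists_window {S : Set ℕ} {p a t r k : ℕ} (hmp : MaxProg S p a t) (hr : r < t)
    (hk : k < t) : ∃ b, (∀ s ≤ k, b + s * p ∈ S) ∧ b ≤ a + r * p ∧ a + r * p ≤ b + k * p := by
  set m := min r (t - 1 - k)
  refine ⟨a + m * p, fun s hs => ?_, ?_, ?_⟩
  · rw [add_assoc, ← add_mul]
    exact hmp.2.1 _ (by omega)
  · have : m * p ≤ r * p := Nat.mul_le_mul_right p (min_le_left _ _)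
    omega
  · have : r * p ≤ (m + k) * p := Nat.mul_le_mul_right p (by omega)
    rw [add_mul] at this
    omega

theorem stmt1_general {α : Type*} (T B : List α) (p Δ' : ℕ)
    (hcov : IsCover B T)
    (hmin : ∀ q, IsPeriod q B → p ≤ q)
    (hprog : ∀ a t, MaxProg {s | OccursAt B T s} p a t → Δ' ≤ t)
    (hlen : B.length + (Δ' - 1) * p ≤ T.length)
    (hper' : IsPeriod p (T.take (B.length + (Δ' - 1) * p))) :
    IsCover (T.take (B.length + (Δ' - 1) * p)) T := by
  rcases eq_or_ne T [] with rfl | hT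
  · exact ⟨⟨0, by simp [OccursAt]⟩, by simp⟩
  have hpB : p ≤ B.length := by
    obtain ⟨i, -, hi0, h0i⟩ := hcov.2 0 (List.length_pos_iff.2 hT)
    exact hmin _ ⟨by omega, fun j hj => absurd hj (by omega)⟩
  set U := T.take (B.length + (Δ' - 1) * p)
  have hUlen : U.length = B.length + (Δ' - 1) * p := List.length_take_of_le hlen
  have hB : B <+: U := by
    have h0 := hcov.occursAt_zero.2
    rw [List.drop_zero] at h0
    rw [← h0]
    exact List.take_prefix_take_left (by omega)
  have hbdd : BddAbove {s | OccursAt B T s} := ⟨T.length, fun s hs => by have := hs.1; omega⟩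
  refine hcov.of_forall_occursAt_extend fun i hi => ?_
  obtain ⟨a, t, r, hmp, hrt, rfl⟩ := exists_maxProg_of_mem hper'.1 hbdd hi
  have : Δ' ≤ t := hprog a t hmp
  obtain ⟨b, hbS, hbi, hib⟩ := hmp.exists_window hrt (k := Δ' - 1) (by omega)
  exact ⟨b, occursAt_of_isPeriod_of_prefix hper' hpB hB hUlen hbS, hbi, by omega⟩

/-- Let `B` be a cover of `T` and `p` the smallest period of `B`. If every
maximal arithmetic progression (with difference `p`) of starting positions of
occurrences of `B` in `T` has at least `Δ' ≥ 1` terms, and the prefix `B'` of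
`T` of length `|B| + (Δ'-1)p` has period `p`, then `B'` is a cover of `T`. -/
theorem stmt1 {α : Type*} (T B : List α) (p Δ' : ℕ)
    (hcov : IsCover B T)
    (hper : IsPeriod p B) (hmin : ∀ q, IsPeriod q B → p ≤ q)
    (hΔ : 1 ≤ Δ')
    (hprog : ∀ a t, MaxProg {s | OccursAt B T s} p a t → Δ' ≤ t)
    (hlen : B.length + (Δ' - 1) * p ≤ T.length)
    (hper' : IsPeriod p (T.take (B.length + (Δ' - 1) * p))) :
    IsCover (T.take (B.length + (Δ' - 1) * p)) T :=
  stmt1_general T B p Δ' hcov hmin hprog hlen hper'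
end

section
/- Let T be a string, let B be a prefix of T that occurs at least once in T, and let p be the smallest period of B. Partition the set of starting positions of occurrences of B in T into maximal arithmetic progressions with common difference p, and let Δ ≥ 2 be the minimum number of terms over these progressions. If |B| + Δ·p ≤ |T| and the prefix B'' of T of length |B| + Δ·p has period p, then B'' is NOT a cover of T. (Concretely, if i, i+p, ..., i+(Δ−1)p is a maximal progression of occurrences of B with exactly Δ terms, then position i+p of T is not covered by any occurrence of B''.) -/
/-!
Let `B''` occur at `s` and cover position `a + p`, where `a, …, a + (Δ-1)p` is a maximal
progression of occurrences of `B`. Since `B''` is `p`-periodic with prefix `B`, `B` occurs at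
`s, s + p, …, s + Δp`, and by minimality of `p` no other occurrence of `B` starts within less than
`p` of one of these. If `a < s`, then `a + p = s` and `a + Δp = s + (Δ-1)p` is an occurrence;
if `s ≤ a < s + p`, then `a = s` and `a + Δp = s + Δp` is an occurrence; if `a ≥ s + p`, the
occurrence at `a` extends one period to the left inside `B''`. Each contradicts maximality.
-/

section Occurrences

variable {α : Type*} {B C T U : List α} {p s x y : ℕ}

theorem occursAt_iff_getElem? :
    OccursAt C T x ↔ x + C.length ≤ T.length ∧ ∀ i < C.length, T[x + i]? = C[i]? := by
  refine ⟨fun ⟨hlen, htake⟩ => ⟨hlen, fun i hi => ?_⟩, fun ⟨hlen, hget⟩ => ⟨hlen, ?_⟩⟩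
  · simpa [List.getElem?_take, hi] using congrArg (·[i]?) htake
  · refine List.ext_getElem? fun i => ?_
    by_cases hi : i < C.length
    · simp [hi, hget]
    · simp only [List.getElem?_take, hi, if_false]
      exact (List.getElem?_eq_none (Nat.le_of_not_lt hi)).symm

theorem OccursAt.length_le (h : OccursAt C T x) : x + C.length ≤ T.length := h.1

theorem OccursAt.getElem? (h : OccursAt C T x) {i : ℕ} (hi : i < C.length) :
    T[x + i]? = C[i]? :=
  (occursAt_iff_getElem?.mp h).2 i hi

theorem occursAt_nil_iff : OccursAt [] T x ↔ x ≤ T.length := by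
  simp [occursAt_iff_getElem?]

theorem OccursAt.trans {j : ℕ} (hC : OccursAt C U j) (hU : OccursAt U T s) :
    OccursAt C T (s + j) := by
  have := hC.length_le
  have := hU.length_le
  refine occursAt_iff_getElem?.mpr ⟨by omega, fun i hi => ?_⟩
  rw [Nat.add_assoc, hU.getElem? (by omega), hC.getElem? hi]

theorem OccursAt.isPeriod_sub (hx : OccursAt B T x) (hy : OccursAt B T y) (hxy : x < y) :
    IsPeriod (y - x) B := by
  refine ⟨Nat.sub_pos_of_lt hxy, fun i hi => ?_⟩
  rw [← hy.getElem? (i := i) (by omega), ← hx.getElem? hi]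
  congr 1
  omega

theorem OccursAt.eq_of_lt_add (hmin : ∀ q, IsPeriod q B → p ≤ q) (hx : OccursAt B T x)
    (hy : OccursAt B T y) (hxy : x ≤ y) (hyx : y < x + p) : x = y := by
  by_contra hne
  have := hmin _ (hx.isPeriod_sub hy (by omega))
  omega

theorem IsPeriod.getElem?_add_mul (h : IsPeriod p U) {i : ℕ} :
    ∀ k, i + k * p < U.length → U[i]? = U[i + k * p]?
  | 0, _ => by simp
  | k + 1, hk => by
    rw [Nat.succ_mul, ← Nat.add_assoc] at hk ⊢
    rw [h.getElem?_add_mul k (by omega), h.2 _ hk]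

theorem IsPeriod.occursAt_mul_of_prefix (h : IsPeriod p U) (hC : C <+: U) {k : ℕ}
    (hk : k * p + C.length ≤ U.length) : OccursAt C U (k * p) := by
  refine occursAt_iff_getElem?.mpr ⟨hk, fun i hi => ?_⟩
  rw [Nat.add_comm, ← h.getElem?_add_mul k (by omega), List.getElem?_eq_getElem hi,
    hC.getElem hi, List.getElem?_eq_getElem]

theorem OccursAt.getElem?_add_period (hU : OccursAt U T s) (hp : IsPeriod p U) (hsx : s ≤ x)
    (hx : x + p < s + U.length) : T[x]? = T[x + p]? := by
  obtain ⟨j, rfl⟩ := Nat.exists_eq_add_of_le hsx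
  rw [hU.getElem? (by omega), Nat.add_assoc, hU.getElem? (by omega), hp.2 j (by omega)]

/-- An occurrence of a `p`-periodic `B` at `b + p` extends one period to the left as long as
`[b, b + 2p)` lies inside an occurrence of a `p`-periodic `U`: the first `p` letters are copied
from `U`, the others from `B`. -/
theorem OccursAt.of_add_period (hU : OccursAt U T s) (hpU : IsPeriod p U) (hpB : IsPeriod p B)
    {b : ℕ} (hB : OccursAt B T (b + p)) (hsb : s ≤ b) (hb : b + 2 * p ≤ s + U.length) :
    OccursAt B T b := by
  have := hB.length_le
  refine occursAt_iff_getElem?.mpr ⟨by omega, fun i hi => ?_⟩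
  rcases Nat.lt_or_ge i p with hip | hpi
  · rw [hU.getElem?_add_period hpU (by omega) (by omega), ← hB.getElem? hi]
    congr 1
    omega
  · obtain ⟨j, rfl⟩ := Nat.exists_eq_add_of_le' hpi
    rw [← hpB.2 j (by omega), ← hB.getElem? (by omega)]
    congr 1
    omega

end Occurrences

section Progressions

variable {α : Type*} {B T : List α} {p a t : ℕ}

theorem ne_nil_of_maxProg (hmin : ∀ q, IsPeriod q B → p ≤ q)
    (hprog : MaxProg {s | OccursAt B T s} p a t) (ht : t * p ≤ T.length) : B ≠ [] := by
  rintro rfl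
  obtain ⟨ht0, hmem, hleft, hright⟩ := hprog
  simp only [Set.mem_ofPred_eq, occursAt_nil_iff] at hmem hleft hright
  have ha := hmem 0 ht0
  have hp : p ≤ 1 := hmin 1 ⟨one_pos, fun i hi => by simp at hi⟩
  interval_cases p
  · simp at hright ha
    omega
  · have ha0 : a = 0 := by
      by_contra ha0
      exact hleft (a - 1) (by omega) (by omega)
    omega

theorem add_period_not_covered_of_maxProg (hpre : B <+: T) (hper : IsPeriod p B)
    (hmin : ∀ q, IsPeriod q B → p ≤ q) {Δ : ℕ} (hΔ : 2 ≤ Δ)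
    (hlen : B.length + Δ * p ≤ T.length) (hper'' : IsPeriod p (T.take (B.length + Δ * p)))
    (hprog : MaxProg {s | OccursAt B T s} p a Δ) {s : ℕ}
    (hs : OccursAt (T.take (B.length + Δ * p)) T s) (hsa : s ≤ a + p)
    (has : a + p < s + (B.length + Δ * p)) : False := by
  obtain ⟨-, hmem, hleft, hright⟩ := hprog
  simp only [Set.mem_ofPred_eq] at hmem hleft hright
  have hBs : ∀ k ≤ Δ, OccursAt B T (s + k * p) := fun k hk =>
    (hper''.occursAt_mul_of_prefix (List.prefix_take_iff.mpr ⟨hpre, by omega⟩)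
      (by grind [List.length_take, Nat.mul_le_mul_right p hk])).trans hs
  have ha : OccursAt B T a := by simpa using hmem 0 (by omega)
  have hap : OccursAt B T (a + p) := by simpa using hmem 1 (by omega)
  have hs0 : OccursAt B T s := by simpa using hBs 0 (Nat.zero_le _)
  rcases Nat.lt_or_ge a s with has_lt | hsa_le
  · obtain rfl : s = a + p := hs0.eq_of_lt_add hmin hap hsa (by omega)
    apply hright
    have := hBs (Δ - 1) (by omega)
    rwa [Nat.sub_one_mul, Nat.add_assoc,
      Nat.add_sub_cancel' (Nat.le_mul_of_pos_left p (by omega))] at this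
  rcases Nat.lt_or_ge a (s + p) with has_lt | hsa_le
  · obtain rfl : s = a := hs0.eq_of_lt_add hmin ha hsa_le has_lt
    exact hright (hBs Δ le_rfl)
  · refine hleft (a - p) (by omega) (hs.of_add_period hper'' hper ?_ (by omega) ?_)
    · rwa [Nat.sub_add_cancel (by omega)]
    · grind [List.length_take]

end Progressions

theorem stmt2_general {α : Type*} (T B : List α) (p Δ : ℕ)
    (hpre : B <+: T)
    (hper : IsPeriod p B) (hmin : ∀ q, IsPeriod q B → p ≤ q)
    (hΔ : 2 ≤ Δ)
    (hach : ∃ a, MaxProg {s | OccursAt B T s} p a Δ)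
    (hlen : B.length + Δ * p ≤ T.length)
    (hper'' : IsPeriod p (T.take (B.length + Δ * p))) :
    ¬ IsCover (T.take (B.length + Δ * p)) T ∧
      ∀ a, MaxProg {s | OccursAt B T s} p a Δ →
        ¬ ∃ s, OccursAt (T.take (B.length + Δ * p)) T s ∧
            s ≤ a + p ∧ a + p < s + (B.length + Δ * p) := by
  have huncovered : ∀ a, MaxProg {s | OccursAt B T s} p a Δ →
      ¬ ∃ s, OccursAt (T.take (B.length + Δ * p)) T s ∧
          s ≤ a + p ∧ a + p < s + (B.length + Δ * p) := fun a ha ⟨_, hs, hsa, has⟩ =>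
    add_period_not_covered_of_maxProg hpre hper hmin hΔ hlen hper'' ha hs hsa has
  refine ⟨fun ⟨_, hcover⟩ => ?_, huncovered⟩
  obtain ⟨a, ha⟩ := hach
  have hB : B ≠ [] := ne_nil_of_maxProg hmin ha (by omega)
  have hap : OccursAt B T (a + p) := by simpa using ha.2.1 1 (by omega)
  obtain ⟨s, hs, hsa, has⟩ := hcover (a + p) (by grind [hap.length_le, List.length_pos_iff])
  exact huncovered a ha ⟨s, hs, hsa, by simpa [hlen] using has⟩

/-- Let `B` be a prefix of `T` occurring at least once in `T`, with smallest
period `p`. If `Δ ≥ 2` is the minimum number of terms over the maximal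
arithmetic progressions (with difference `p`) of starting positions of
occurrences of `B` in `T`, `|B| + Δp ≤ |T|`, and the prefix `B''` of `T` of
length `|B| + Δp` has period `p`, then `B''` is not a cover of `T`; concretely,
for any maximal progression `a, a+p, ..., a+(Δ-1)p` with exactly `Δ` terms,
position `a + p` of `T` is not covered by any occurrence of `B''`. -/
theorem stmt2 {α : Type*} (T B : List α) (p Δ : ℕ)
    (hpre : B <+: T) (hocc : ∃ s, OccursAt B T s)
    (hper : IsPeriod p B) (hmin : ∀ q, IsPeriod q B → p ≤ q)
    (hΔ : 2 ≤ Δ)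
    (hlb : ∀ a t, MaxProg {s | OccursAt B T s} p a t → Δ ≤ t)
    (hach : ∃ a, MaxProg {s | OccursAt B T s} p a Δ)
    (hlen : B.length + Δ * p ≤ T.length)
    (hper'' : IsPeriod p (T.take (B.length + Δ * p))) :
    ¬ IsCover (T.take (B.length + Δ * p)) T ∧
      ∀ a, MaxProg {s | OccursAt B T s} p a Δ →
        ¬ ∃ s, OccursAt (T.take (B.length + Δ * p)) T s ∧
            s ≤ a + p ∧ a + p < s + (B.length + Δ * p) :=
  stmt2_general T B p Δ hpre hper hmin hΔ hach hlen hper''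
end

section
/- Let Fib be the infinite Fibonacci word and F_k the Fibonacci numbers (F_0 = F_1 = 1, F_2 = 2, F_3 = 3, F_4 = 5, ...). For every m ≥ 2 and every ℓ > F_{m−1}: the prefix Fib[0..ℓ−F_{m−1}) is a border of the prefix Fib[0..ℓ) if and only if ℓ ≤ F_{m+1} − 2. Equivalently, F_{m−1} is a period of Fib[0..ℓ) if and only if ℓ ≤ F_{m+1} − 2. -/
/-- Fibonacci strings over `Bool` (`true` = a, `false` = b):
`Fib_0 = b`, `Fib_1 = a`, `Fib_m = Fib_{m-1} Fib_{m-2}`. -/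
def fibWord : ℕ → List Bool
  | 0 => [false]
  | 1 => [true]
  | (m + 2) => fibWord (m + 1) ++ fibWord m

/-- Fibonacci numbers `F_k = |Fib_k|`: `F_0 = F_1 = 1`, `F_2 = 2`, `F_3 = 3`, ... -/
def F (k : ℕ) : ℕ := (fibWord k).length

/-- The `n`-th letter of the infinite Fibonacci word (each `Fib_m`, `m ≥ 1`,
is a prefix of the infinite word, and `F_{n+2} > n`). -/
def fibInf (n : ℕ) : Bool := (fibWord (n + 2)).getD n false

/-- The length-`ℓ` prefix `Fib[0..ℓ)` of the infinite Fibonacci word. -/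
def fibPrefix (ℓ : ℕ) : List Bool := (List.range ℓ).map fibInf

/-- `Cov_Fib[ℓ]`: the length of the shortest cover of `Fib[0..ℓ)`. -/
noncomputable def covFib (ℓ : ℕ) : ℕ := covLen (fibPrefix ℓ)


namespace Stmt4Aux

def dw (k : ℕ) : List Bool := if k % 2 = 0 then [true, false] else [false, true]

lemma dw_rev (k : ℕ) : dw (k+1) = (dw k).reverse := by
  rcases Nat.mod_two_eq_zero_or_one k with h | h <;>
    simp [dw, Nat.add_mod, h]

lemma dw_length (k : ℕ) : (dw k).length = 2 := by
  rcases Nat.mod_two_eq_zero_or_one k with h | h <;> simp [dw, h]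

lemma dw_head (k : ℕ) : (dw k)[0]? = some (decide (k % 2 = 0)) := by
  rcases Nat.mod_two_eq_zero_or_one k with h | h <;> simp [dw, h]

lemma fibWord_ss (m : ℕ) : fibWord (m+2) = fibWord (m+1) ++ fibWord m := rfl

lemma dLemma (m : ℕ) : ∃ w : List Bool,
    fibWord (m+2) = w ++ dw m ∧ fibWord m ++ fibWord (m+1) = w ++ (dw m).reverse := by
  induction m with
  | zero => exact ⟨[], by decide, by decide⟩
  | succ k ih =>
    obtain ⟨w, h1, h2⟩ := ih
    refine ⟨fibWord (k+1) ++ w, ?_, ?_⟩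
    · rw [fibWord_ss (k+1), fibWord_ss k, List.append_assoc, h2, dw_rev,
        ← List.append_assoc]
    · rw [h1, dw_rev, List.reverse_reverse, List.append_assoc]

lemma F_zero : F 0 = 1 := rfl
lemma F_one : F 1 = 1 := rfl
lemma F_ss (k : ℕ) : F (k+2) = F (k+1) + F k := by
  simp [F, fibWord_ss]

lemma F_pos (k : ℕ) : 1 ≤ F k := by
  induction k using Nat.strong_induction_on with
  | _ k ih =>
    match k with
    | 0 => exact le_refl 1
    | 1 => exact le_refl 1
    | (j+2) => rw [F_ss]; have := ih (j+1) (by omega); omega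

lemma F_two_le (k : ℕ) : 2 ≤ F (k+2) := by
  rw [F_ss]; have := F_pos k; have := F_pos (k+1); omega

lemma fibWord_prefix_succ (m : ℕ) (hm : 1 ≤ m) : fibWord m <+: fibWord (m+1) := by
  obtain ⟨j, rfl⟩ := Nat.exists_eq_add_of_le hm
  rw [Nat.add_comm 1 j, fibWord_ss]
  exact List.prefix_append _ _

lemma fibWord_prefix (m k : ℕ) (hm : 1 ≤ m) (hk : m ≤ k) : fibWord m <+: fibWord k := by
  induction k with
  | zero => omega
  | succ j ih =>
    rcases Nat.lt_or_ge m (j+1) with h | h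
    · exact (ih (by omega)).trans (fibWord_prefix_succ j (by omega))
    · have : m = j + 1 := by omega
      subst this; rfl

lemma getElem?_of_prefix {u v : List Bool} (h : u <+: v) {n : ℕ} (hn : n < u.length) :
    v[n]? = u[n]? := by
  obtain ⟨t, rfl⟩ := h
  exact List.getElem?_append_left hn

lemma lt_F_add_two (n : ℕ) : n < F (n + 2) := by
  induction n with
  | zero => have := F_two_le 0; omega
  | succ j ih =>
    have h : F (j + 1 + 2) = F (j + 2) + F (j + 1) := F_ss (j+1)
    have := F_pos (j+1)
    omega

lemma fibInf_eq (k n : ℕ) (hk : 1 ≤ k) (h : n < F k) :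
    (fibWord k)[n]? = some (fibInf n) := by
  have hn2 : n < F (n + 2) := lt_F_add_two n
  have hd : (fibWord (n+2))[n]? = some (fibInf n) := by
    unfold fibInf
    rw [List.getD_eq_getElem?_getD]
    rw [List.getElem?_eq_getElem hn2]
    rfl
  rcases Nat.le_total k (n + 2) with hle | hle
  · rw [← getElem?_of_prefix (fibWord_prefix k (n+2) hk hle) h]
    exact hd
  · rw [getElem?_of_prefix (fibWord_prefix (n+2) k (by omega) hle) hn2]
    exact hd

lemma fibPrefix_length (ℓ : ℕ) : (fibPrefix ℓ).length = ℓ := by simp [fibPrefix]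

lemma fibPrefix_getElem? (ℓ i : ℕ) (h : i < ℓ) : (fibPrefix ℓ)[i]? = some (fibInf i) := by
  simp [fibPrefix, List.getElem?_map, List.getElem?_range h]

lemma fibPrefix_getElem?_none (ℓ i : ℕ) (h : ℓ ≤ i) : (fibPrefix ℓ)[i]? = none := by
  apply List.getElem?_eq_none
  simp [fibPrefix_length, h]

lemma fibPrefix_prefix {a b : ℕ} (h : a ≤ b) : fibPrefix a <+: fibPrefix b := by
  have : fibPrefix a = (fibPrefix b).take a := by
    apply List.ext_getElem?
    intro n
    rcases Nat.lt_or_ge n a with hn | hn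
    · rw [List.getElem?_take, if_pos hn, fibPrefix_getElem? a n hn,
        fibPrefix_getElem? b n (by omega)]
    · rw [fibPrefix_getElem?_none a n hn]
      symm
      apply List.getElem?_eq_none
      simp [List.length_take, fibPrefix_length]; omega
  rw [this]; exact List.take_prefix _ _

/-- head letter at position F(k+2) - 2. -/
lemma fibInf_at (k : ℕ) : fibInf (F (k+2) - 2) = decide (k % 2 = 0) := by
  obtain ⟨w, h1, _⟩ := dLemma k
  have hw : w.length = F (k+2) - 2 := by
    have : F (k+2) = w.length + 2 := by
      rw [F]; rw [h1]; simp [dw_length]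
    omega
  have h2 := F_two_le k
  have := fibInf_eq (k+2) (F (k+2) - 2) (by omega) (by omega)
  rw [h1, List.getElem?_append_right (by omega), hw] at this
  simp only [Nat.sub_self] at this
  rw [dw_head] at this
  exact (Option.some_injective _ this.symm)

lemma fibInf_mismatch (k : ℕ) : fibInf (F (k+2) - 2) ≠ fibInf (F (k+3) - 2) := by
  rw [fibInf_at k, fibInf_at (k+1)]
  rcases Nat.mod_two_eq_zero_or_one k with h | h <;> simp [Nat.add_mod, h]

lemma triple (x : List Bool) (j : ℕ) (h : j + x.length < 3 * x.length) :
    (x ++ x ++ x)[j]? = (x ++ x ++ x)[j + x.length]? := by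
  have h1 : (x ++ x ++ x)[j]? = (x ++ x)[j]? := by
    exact List.getElem?_append_left (by simp; omega)
  have h2 : (x ++ (x ++ x))[j + x.length]? = (x ++ x)[j]? := by
    rw [List.getElem?_append_right (by omega)]
    simp
  rw [h1, List.append_assoc, h2]

/-- Period holds: for m = k+3, i + F(k+2) < F(k+4) - 2 implies letter equality. -/
lemma period_holds (k i : ℕ) (hi : i + F (k+2) < F (k+4) - 2) :
    fibInf i = fibInf (i + F (k+2)) := by
  obtain ⟨w, h1, h2⟩ := dLemma (k+2)
  set x := fibWord (k+2) with hx
  have hw : w.length = F (k+4) - 2 := by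
    have : F (k+4) = w.length + 2 := by rw [F, h1]; simp [dw_length]
    omega
  have hxlen : x.length = F (k+2) := rfl
  -- w is a prefix of x ++ x ++ x
  have hpre : w <+: x ++ x ++ x := by
    have e1 : fibWord (k+2) ++ fibWord (k+3) = x ++ (x ++ fibWord (k+1)) := by
      rw [fibWord_ss (k+1)]
    have hpw : w <+: fibWord (k+2) ++ fibWord (k+3) := by
      rw [h2]; exact List.prefix_append _ _
    have hsub : fibWord (k+1) <+: x := fibWord_prefix (k+1) (k+2) (by omega) (by omega)
    obtain ⟨t, ht⟩ := hsub
    have : fibWord (k+2) ++ fibWord (k+3) <+: x ++ x ++ x := by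
      rw [e1, ← ht]
      refine ⟨t, ?_⟩
      simp [List.append_assoc]
    exact hpw.trans this
  have hF : F (k+4) - 2 ≤ 3 * F (k+2) := by
    have e4 : F (k+4) = F (k+3) + F (k+2) := F_ss (k+2)
    have e3 : F (k+3) = F (k+2) + F (k+1) := F_ss (k+1)
    have : F (k+1) ≤ F (k+2) := by rw [F_ss k]; have := F_pos k; omega
    omega
  have key : ∀ j, j < F (k+4) - 2 → (x ++ x ++ x)[j]? = some (fibInf j) := by
    intro j hj
    rw [getElem?_of_prefix hpre (by omega)]
    have := fibInf_eq (k+4) j (by omega) (by omega)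
    rw [h1, List.getElem?_append_left (by omega)] at this
    exact this
  have t1 := key i (by omega)
  have t2 := key (i + F (k+2)) hi
  have t3 := triple x i (by rw [hxlen]; omega)
  rw [hxlen] at t3
  rw [t1, t2] at t3
  exact Option.some_injective _ t3

end Stmt4Aux

/-- For `m ≥ 2` and `ℓ > F_{m-1}`: `Fib[0..ℓ-F_{m-1})` is a border of
`Fib[0..ℓ)` iff `ℓ ≤ F_{m+1} - 2`; equivalently, `F_{m-1}` is a period of
`Fib[0..ℓ)` iff `ℓ ≤ F_{m+1} - 2`. -/
theorem stmt4 (m : ℕ) (hm : 2 ≤ m) (ℓ : ℕ) (hℓ : F (m - 1) < ℓ) :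
    (IsBorder (fibPrefix (ℓ - F (m - 1))) (fibPrefix ℓ) ↔ ℓ ≤ F (m + 1) - 2) ∧
    (IsPeriod (F (m - 1)) (fibPrefix ℓ) ↔ ℓ ≤ F (m + 1) - 2) := by
  open Stmt4Aux in
  obtain ⟨k, rfl⟩ : ∃ k, m = k + 2 := ⟨m - 2, by omega⟩
  have em1 : k + 2 - 1 = k + 1 := rfl
  rw [em1] at hℓ ⊢
  have em2 : k + 2 + 1 = k + 3 := rfl
  rw [em2]
  have hppos : 1 ≤ F (k+1) := F_pos (k+1)
  -- period ↔ length bound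
  have piff : IsPeriod (F (k+1)) (fibPrefix ℓ) ↔ ℓ ≤ F (k+3) - 2 := by
    constructor
    · rintro ⟨-, hper⟩
      by_contra hgt
      push_neg at hgt
      have h2 : 2 ≤ F (k+2) := F_two_le k
      have h3 : 2 ≤ F (k+3) := F_two_le (k+1)
      have e3 : F (k+3) = F (k+2) + F (k+1) := F_ss (k+1)
      have hcond : (F (k+2) - 2) + F (k+1) < (fibPrefix ℓ).length := by
        rw [fibPrefix_length]; omega
      have hmm := hper (F (k+2) - 2) hcond
      have hidx : (F (k+2) - 2) + F (k+1) = F (k+3) - 2 := by omega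
      rw [hidx, fibPrefix_getElem? ℓ (F (k+2) - 2) (by omega),
        fibPrefix_getElem? ℓ (F (k+3) - 2) (by omega)] at hmm
      exact fibInf_mismatch k (Option.some_injective _ hmm)
    · intro hle
      by_cases hk : k = 0
      · exfalso
        subst hk
        have e1 : F (0+1) = 1 := rfl
        have e3 : F (0+3) = 3 := rfl
        omega
      · obtain ⟨j, rfl⟩ : ∃ j, k = j + 1 := ⟨k - 1, by omega⟩
        refine ⟨hppos, ?_⟩
        intro i hi
        rw [fibPrefix_length] at hi
        have e1 : F (j+1+1) = F (j+2) := rfl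
        have e2 : F (j+1+3) = F (j+4) := rfl
        have hcond : i + F (j+2) < F (j+4) - 2 := by omega
        have hfi := period_holds j i hcond
        have hF2 : 1 ≤ F (j+2) := F_pos (j+2)
        rw [fibPrefix_getElem? ℓ i (by omega),
          fibPrefix_getElem? ℓ (i + F (j+1+1)) (by omega), e1]
        exact congrArg some hfi
  -- border ↔ period
  have biff : IsBorder (fibPrefix (ℓ - F (k+1))) (fibPrefix ℓ) ↔
      IsPeriod (F (k+1)) (fibPrefix ℓ) := by
    constructor
    · rintro ⟨-, hsuf⟩
      refine ⟨hppos, ?_⟩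
      intro i hi
      rw [fibPrefix_length] at hi
      obtain ⟨t, ht⟩ := hsuf
      have hlen : t.length = F (k+1) := by
        have := congrArg List.length ht
        simp only [List.length_append, fibPrefix_length] at this
        omega
      have hdrop : (fibPrefix ℓ).drop (F (k+1)) = fibPrefix (ℓ - F (k+1)) := by
        rw [← ht, ← hlen, List.drop_left]
      rw [fibPrefix_getElem? ℓ i (by omega),
        show i + F (k+1) = F (k+1) + i from Nat.add_comm _ _,
        ← List.getElem?_drop, hdrop, fibPrefix_getElem? (ℓ - F (k+1)) i (by omega)]
    · rintro ⟨-, hper⟩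
      constructor
      · exact fibPrefix_prefix (by omega)
      · rw [List.suffix_iff_eq_drop]
        have hlen : (fibPrefix ℓ).length - (fibPrefix (ℓ - F (k+1))).length = F (k+1) := by
          rw [fibPrefix_length, fibPrefix_length]; omega
        rw [hlen]
        apply List.ext_getElem?
        intro n
        rcases Nat.lt_or_ge n (ℓ - F (k+1)) with hn | hn
        · rw [fibPrefix_getElem? _ n hn, List.getElem?_drop,
            show F (k+1) + n = n + F (k+1) from Nat.add_comm _ _,
            fibPrefix_getElem? ℓ (n + F (k+1)) (by omega)]
          have := hper n (by rw [fibPrefix_length]; omega)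
          rw [fibPrefix_getElem? ℓ n (by omega),
            fibPrefix_getElem? ℓ (n + F (k+1)) (by omega)] at this
          exact this
        · rw [fibPrefix_getElem?_none _ n hn, List.getElem?_drop]
          symm
          apply fibPrefix_getElem?_none
          omega
  exact ⟨biff.trans piff, piff⟩
end

section
/- Let Fib be the infinite Fibonacci word and F_k the Fibonacci numbers (F_0 = F_1 = 1, F_2 = 2, F_3 = 3, F_4 = 5, ...). For every k ≥ 4: (a) the longest proper border of the prefix Fib[0..F_k−1) has length F_{k−2}−1, i.e., it equals Fib[0..F_{k−2}−1); and (b) the longest proper border of the prefix Fib[0..2F_k−1) has length F_k−1, i.e., it equals Fib[0..F_k−1). -/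
/-!
A border of length `b` of a word of length `n` is the same thing as a period `n - b`, so the
longest proper border is determined by the smallest period. The prefix of length `F (m+2) - 1`
of the Fibonacci word has smallest period `F (m+1)`. It is a period because `Fib_m Fib_{m+1}` and
`Fib_{m+1} Fib_m` agree up to their last two letters. It is the smallest one by induction on `m`:
if `p < F (m+1)` were a period, the case `m - 1` gives `F m ≤ p`, and `r = F (m+1) - p`, the
difference of two periods, is a period of the prefix of length `F (m+2) - 1 - p`; the cases
`m - 2` and `m - 1` applied to `r` then contradict each other.
-/

open List

theorem List.hasPeriod_of_drop_prefix {α : Type*} {w : List α} {p : ℕ} (h : w.drop p <+: w) :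
    w.HasPeriod p := by
  unfold HasPeriod
  conv_lhs => rw [← take_append_drop p w]
  exact (prefix_append_right_inj _).mpr h

theorem IsBorder.hasPeriod {α : Type*} {B T : List α} (h : IsBorder B T) :
    T.HasPeriod (T.length - B.length) := by
  obtain ⟨hpre, hsuf⟩ := h
  apply hasPeriod_of_drop_prefix
  rwa [← suffix_iff_eq_drop.mp hsuf]

theorem fibWord_add_two (m : ℕ) : fibWord (m + 2) = fibWord (m + 1) ++ fibWord m := rfl

theorem F_add_two (m : ℕ) : F (m + 2) = F (m + 1) + F m := by
  simp [F, fibWord_add_two]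

theorem F_pos (m : ℕ) : 0 < F m := by
  induction m using Nat.twoStepInduction with
  | zero | one => decide
  | more m h _ => rw [F_add_two]; omega

theorem lt_F_succ (n : ℕ) : n < F (n + 1) := by
  induction n with
  | zero => decide
  | succ n ih => have := F_pos n; rw [F_add_two]; omega

theorem fibWord_prefix_of_le {m m' : ℕ} (hm : 1 ≤ m) (h : m ≤ m') :
    fibWord m <+: fibWord m' := by
  induction m', h using Nat.le_induction with
  | base => exact prefix_rfl
  | succ n hn ih =>
    obtain ⟨n, rfl⟩ : ∃ n', n = n' + 1 := ⟨n - 1, by omega⟩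
    exact ih.trans (prefix_append _ _)

theorem getElem?_fibWord {m n : ℕ} (hm : 1 ≤ m) (hn : n < F m) :
    (fibWord m)[n]? = some (fibInf n) := by
  have hn' : n < F (n + 2) := Nat.lt_of_succ_lt (lt_F_succ (n + 1))
  have key : (fibWord m)[n]? = (fibWord (n + 2))[n]? := by
    rcases le_total m (n + 2) with h | h
    · exact (getElem?_eq_getElem hn).trans
        (prefix_iff_getElem?.mp (fibWord_prefix_of_le hm h) n hn).symm
    · exact (prefix_iff_getElem?.mp (fibWord_prefix_of_le (by omega) h) n hn').trans
        (getElem?_eq_getElem hn').symm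
  rw [key, fibInf, getD_eq_getElem?_getD, getElem?_eq_getElem hn']
  rfl

theorem length_fibPrefix (ℓ : ℕ) : (fibPrefix ℓ).length = ℓ := by simp [fibPrefix]

theorem take_fibPrefix {a n : ℕ} (h : a ≤ n) : (fibPrefix n).take a = fibPrefix a := by
  simp [fibPrefix, ← map_take, take_range, min_eq_left h]

theorem fibPrefix_eq_take {m ℓ : ℕ} (hm : 1 ≤ m) (h : ℓ ≤ F m) :
    fibPrefix ℓ = (fibWord m).take ℓ := by
  refine ext_getElem? fun n => ?_
  rw [getElem?_take]
  split_ifs with hn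
  · simp [fibPrefix, hn, getElem?_fibWord hm (by omega : n < F m)]
  · simp [fibPrefix, hn]

theorem eq_fibPrefix_of_prefix {b : List Bool} {n : ℕ} (h : b <+: fibPrefix n) :
    b = fibPrefix b.length := by
  have hl : b.length ≤ n := length_fibPrefix n ▸ h.length_le
  rw [← take_fibPrefix hl, ← prefix_iff_eq_take.mp h]

theorem List.HasPeriod.drop_fibPrefix {n p : ℕ} (h : (fibPrefix n).HasPeriod p) :
    (fibPrefix n).drop p = fibPrefix (n - p) := by
  simpa only [length_drop, length_fibPrefix] using eq_fibPrefix_of_prefix (h.drop_prefix p)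

theorem List.HasPeriod.fibPrefix_of_le {n m p : ℕ} (h : (fibPrefix n).HasPeriod p)
    (hmn : m ≤ n) : (fibPrefix m).HasPeriod p :=
  h.infix (take_fibPrefix hmn ▸ (take_prefix m _).isInfix)

theorem take_fibWord_append_comm (m : ℕ) :
    (fibWord m ++ fibWord (m + 1)).take (F (m + 2) - 2) =
      (fibWord (m + 1) ++ fibWord m).take (F (m + 2) - 2) := by
  induction m with
  | zero => decide
  | succ m ih =>
    have e₂ : F (m + 2) = F (m + 1) + F m := F_add_two m
    have e₃ : F (m + 3) = F (m + 2) + F (m + 1) := F_add_two (m + 1)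
    have hF : F (m + 3) - 2 = (fibWord (m + 1)).length + (F (m + 2) - 2) := by
      have := F_pos (m + 1); have := F_pos m; change _ = F (m + 1) + _; omega
    change (fibWord (m + 1) ++ fibWord (m + 2)).take (F (m + 3) - 2) =
      (fibWord (m + 2) ++ fibWord (m + 1)).take (F (m + 3) - 2)
    rw [hF, fibWord_add_two, append_assoc, take_length_add_append, take_length_add_append, ih]

theorem drop_fibPrefix_F (m : ℕ) :
    (fibPrefix (F (m + 3) - 2)).drop (F (m + 1)) = fibPrefix (F (m + 2) - 2) := by
  have e₂ : F (m + 2) = F (m + 1) + F m := F_add_two m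
  have e₃ : F (m + 3) = F (m + 2) + F (m + 1) := F_add_two (m + 1)
  have hF : F (m + 3) - 2 - F (m + 1) = F (m + 2) - 2 := by omega
  rw [fibPrefix_eq_take (m := m + 3) (by omega) (by omega), drop_take, hF,
    fibPrefix_eq_take (m := m + 2) (by omega) (by omega), fibWord_add_two (m + 1),
    fibWord_add_two m, append_assoc, show F (m + 1) = (fibWord (m + 1)).length from rfl,
    drop_left, take_fibWord_append_comm]

theorem hasPeriod_fibPrefix_F (m : ℕ) : (fibPrefix (F (m + 3) - 2)).HasPeriod (F (m + 1)) := by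
  apply hasPeriod_of_drop_prefix
  have e₃ : F (m + 3) = F (m + 2) + F (m + 1) := F_add_two (m + 1)
  rw [drop_fibPrefix_F, ← take_fibPrefix (n := F (m + 3) - 2) (by omega)]
  exact take_prefix _ _

theorem F_le_of_hasPeriod_fibPrefix (m : ℕ) {p : ℕ} (hp : 0 < p)
    (h : (fibPrefix (F (m + 2) - 1)).HasPeriod p) : F (m + 1) ≤ p := by
  induction m using Nat.twoStepInduction generalizing p with
  | zero => exact hp
  | one =>
    by_contra! hlt
    obtain rfl : p = 1 := by change p < 2 at hlt; omega
    have := hasPeriod_iff_getElem?.mp h 0 (by decide)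
    revert this; decide
  | more i ih₀ ih₁ =>
    replace ih₁ : ∀ {p}, 0 < p → (fibPrefix (F (i + 3) - 1)).HasPeriod p → F (i + 2) ≤ p := ih₁
    change (fibPrefix (F (i + 4) - 1)).HasPeriod p at h
    change F (i + 3) ≤ p
    have e₂ : F (i + 2) = F (i + 1) + F i := F_add_two i
    have e₃ : F (i + 3) = F (i + 2) + F (i + 1) := F_add_two (i + 1)
    have e₄ : F (i + 4) = F (i + 3) + F (i + 2) := F_add_two (i + 2)
    have e₅ : F (i + 5) = F (i + 4) + F (i + 3) := F_add_two (i + 3)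
    have := F_pos i
    by_contra! hlt
    have hp₁ : F (i + 2) ≤ p := ih₁ hp (h.fibPrefix_of_le (by omega))
    set r := F (i + 3) - p
    have hF : (fibPrefix (F (i + 4) - 1)).HasPeriod (r + p) := by
      rw [Nat.sub_add_cancel hlt.le]
      have hq : (fibPrefix (F (i + 5) - 2)).HasPeriod (F (i + 3)) := hasPeriod_fibPrefix_F (i + 2)
      exact hq.fibPrefix_of_le (by omega)
    have hr : (fibPrefix (F (i + 4) - 1 - p)).HasPeriod r := by
      simpa only [h.drop_fibPrefix] using h.drop_of_hasPeriod_add hF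
    have hr₁ : F (i + 1) ≤ r := ih₀ (by omega) (hr.fibPrefix_of_le (by omega))
    have hr₂ : F (i + 2) ≤ r := ih₁ (by omega) (hr.fibPrefix_of_le (by omega))
    omega

theorem longest_border_fibPrefix {n p : ℕ} (hp : (fibPrefix n).HasPeriod p) (hp₀ : 0 < p)
    (hpn : p ≤ n) (hmin : ∀ q, 0 < q → (fibPrefix n).HasPeriod q → p ≤ q) :
    IsBorder (fibPrefix (n - p)) (fibPrefix n) ∧ n - p < n ∧
      ∀ b : List Bool, IsBorder b (fibPrefix n) → b.length < n →
        b.length ≤ n - p ∧ b = fibPrefix b.length := by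
  refine ⟨⟨take_fibPrefix (n.sub_le p) ▸ take_prefix _ _, hp.drop_fibPrefix ▸ drop_suffix _ _⟩,
    by omega, fun b hb hlt => ⟨?_, eq_fibPrefix_of_prefix hb.1⟩⟩
  have := hmin _ (by omega) (length_fibPrefix n ▸ hb.hasPeriod)
  omega

/-- For `k ≥ 4`: (a) the longest proper border of `Fib[0..F_k - 1)` is
`Fib[0..F_{k-2} - 1)`; (b) the longest proper border of `Fib[0..2F_k - 1)` is
`Fib[0..F_k - 1)`. (Every border is a prefix, hence equals the Fibonacci
prefix of its length.) -/
theorem stmt5 (k : ℕ) (hk : 4 ≤ k) :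
    (IsBorder (fibPrefix (F (k - 2) - 1)) (fibPrefix (F k - 1)) ∧
      F (k - 2) - 1 < F k - 1 ∧
      ∀ b : List Bool, IsBorder b (fibPrefix (F k - 1)) → b.length < F k - 1 →
        b.length ≤ F (k - 2) - 1 ∧ b = fibPrefix b.length) ∧
    (IsBorder (fibPrefix (F k - 1)) (fibPrefix (2 * F k - 1)) ∧
      F k - 1 < 2 * F k - 1 ∧
      ∀ b : List Bool, IsBorder b (fibPrefix (2 * F k - 1)) → b.length < 2 * F k - 1 →
        b.length ≤ F k - 1 ∧ b = fibPrefix b.length) := by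
  obtain ⟨j, rfl⟩ : ∃ j, k = j + 4 := ⟨k - 4, by omega⟩
  have e₄ : F (j + 4) = F (j + 3) + F (j + 2) := F_add_two (j + 2)
  have e₅ : F (j + 5) = F (j + 4) + F (j + 3) := F_add_two (j + 3)
  have e₆ : F (j + 6) = F (j + 5) + F (j + 4) := F_add_two (j + 4)
  have := F_pos (j + 2); have := F_pos (j + 3)
  have per_a : (fibPrefix (F (j + 5) - 2)).HasPeriod (F (j + 3)) := hasPeriod_fibPrefix_F _
  have per_b : (fibPrefix (F (j + 6) - 2)).HasPeriod (F (j + 4)) := hasPeriod_fibPrefix_F _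
  have part_a := longest_border_fibPrefix (n := F (j + 4) - 1)
    (per_a.fibPrefix_of_le (by omega)) (F_pos _) (by omega)
    fun q hq h => F_le_of_hasPeriod_fibPrefix (j + 2) hq h
  have part_b := longest_border_fibPrefix (n := 2 * F (j + 4) - 1)
    (per_b.fibPrefix_of_le (by omega)) (F_pos _) (by omega)
    fun q hq h => F_le_of_hasPeriod_fibPrefix (j + 3) hq
      (h.fibPrefix_of_le (m := F (j + 5) - 1) (by omega))
  rw [show F (j + 4) - 1 - F (j + 3) = F (j + 2) - 1 by omega] at part_a
  rw [show 2 * F (j + 4) - 1 - F (j + 4) = F (j + 4) - 1 by omega] at part_b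
  exact ⟨part_a, part_b⟩
end
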